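/- Let n and N be positive integers, let G be a real N×n matrix, let Y be a real N×N matrix, and let T = [[Iₙ, 0],[G, Y]] be the block lower triangular (n+N)×(n+N) matrix with identity (1,1) block. Let q be a real polynomial and define p(z) = (1 − z)·q(z). Then p(0) = q(0), deg p ≤ deg q + 1, and ‖p(T)‖ ≤ (1 + ‖G‖ + ‖Y‖)·‖q(Y)‖, where ‖·‖ is the spectral norm and p(T), q(Y) denote polynomial evaluations at the matrices T and Y. -/

import Mathlib

open Matrix Polynomial

/-- The spectral norm (ℓ²-operator norm) of a real matrix. -/
noncomputable def spectralNorm' {m n : Type*} [Fintype m] [Fintype n] [DecidableEq n]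
    (M : Matrix m n ℝ) : ℝ :=
  ‖LinearMap.toContinuousLinearMap (Matrix.toEuclideanLin (𝕜 := ℝ) M)‖

open scoped Matrix.Norms.L2Operator

lemma spectralNorm'_eq_norm {m n : Type*} [Fintype m] [Fintype n] [DecidableEq n]
    (M : Matrix m n ℝ) : spectralNorm' M = ‖M‖ := rfl

lemma euclid_apply_norm {a b : Type*} [Fintype a] [Fintype b] [DecidableEq a] [DecidableEq b]
    (M : Matrix a b ℝ) (x : EuclideanSpace ℝ b) :
    ‖Matrix.toEuclideanLin (𝕜 := ℝ) M x‖ ≤ ‖M‖ * ‖x‖ :=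
  (LinearMap.toContinuousLinearMap (Matrix.toEuclideanLin (𝕜 := ℝ) M)).le_opNorm x

lemma norm_fromBlocks_lowerLeft {a b : Type*} [Fintype a] [Fintype b]
    [DecidableEq a] [DecidableEq b] (A : Matrix b a ℝ) :
    ‖Matrix.fromBlocks (0 : Matrix a a ℝ) (0 : Matrix a b ℝ) A (0 : Matrix b b ℝ)‖ ≤ ‖A‖ := by
  rw [Matrix.l2_opNorm_def]
  refine ContinuousLinearMap.opNorm_le_bound _ (norm_nonneg _) fun x => ?_
  set x₁ : EuclideanSpace ℝ a := (WithLp.equiv 2 (a → ℝ)).symm (fun i => x (Sum.inl i)) with hx1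
  show ‖Matrix.toEuclideanLin (𝕜 := ℝ) (Matrix.fromBlocks (0 : Matrix a a ℝ) 0 A 0) x‖
      ≤ ‖A‖ * ‖x‖
  have happ : Matrix.toEuclideanLin (𝕜 := ℝ) (Matrix.fromBlocks (0 : Matrix a a ℝ) 0 A 0) x
      = (WithLp.equiv 2 ((a ⊕ b) → ℝ)).symm
        (Sum.elim 0 (A *ᵥ fun i => x (Sum.inl i))) := by
    rw [Matrix.toEuclideanLin_apply, Matrix.fromBlocks_mulVec]
    congr 1
    simp [Matrix.zero_mulVec]
    rfl
  have key : ‖Matrix.toEuclideanLin (𝕜 := ℝ) (Matrix.fromBlocks (0 : Matrix a a ℝ) 0 A 0) x‖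
      = ‖Matrix.toEuclideanLin (𝕜 := ℝ) A x₁‖ := by
    rw [happ, Matrix.toEuclideanLin_apply]
    rw [EuclideanSpace.norm_eq, EuclideanSpace.norm_eq]
    congr 1
    rw [Fintype.sum_sum_type]
    simp [hx1]
  rw [key]
  have h1 : ‖x₁‖ ≤ ‖x‖ := by
    rw [EuclideanSpace.norm_eq, EuclideanSpace.norm_eq]
    apply Real.sqrt_le_sqrt
    rw [Fintype.sum_sum_type]
    have h2 : (0:ℝ) ≤ ∑ j : b, ‖x (Sum.inr j)‖^2 := by positivity
    have h3 : ∑ i : a, ‖x₁ i‖^2 = ∑ i : a, ‖x (Sum.inl i)‖^2 := by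
      simp [hx1]
    rw [h3]
    linarith
  calc ‖Matrix.toEuclideanLin (𝕜 := ℝ) A x₁‖ ≤ ‖A‖ * ‖x₁‖ := euclid_apply_norm A x₁
    _ ≤ ‖A‖ * ‖x‖ := mul_le_mul_of_nonneg_left h1 (norm_nonneg A)

lemma norm_fromBlocks_lowerRight {a b : Type*} [Fintype a] [Fintype b]
    [DecidableEq a] [DecidableEq b] (B : Matrix b b ℝ) :
    ‖Matrix.fromBlocks (0 : Matrix a a ℝ) (0 : Matrix a b ℝ) (0 : Matrix b a ℝ) B‖ ≤ ‖B‖ := by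
  rw [Matrix.l2_opNorm_def]
  refine ContinuousLinearMap.opNorm_le_bound _ (norm_nonneg _) fun x => ?_
  set x₂ : EuclideanSpace ℝ b := (WithLp.equiv 2 (b → ℝ)).symm (fun i => x (Sum.inr i)) with hx2
  show ‖Matrix.toEuclideanLin (𝕜 := ℝ) (Matrix.fromBlocks (0 : Matrix a a ℝ) 0 0 B) x‖
      ≤ ‖B‖ * ‖x‖
  have happ : Matrix.toEuclideanLin (𝕜 := ℝ) (Matrix.fromBlocks (0 : Matrix a a ℝ) 0 0 B) x
      = (WithLp.equiv 2 ((a ⊕ b) → ℝ)).symm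
        (Sum.elim 0 (B *ᵥ fun i => x (Sum.inr i))) := by
    rw [Matrix.toEuclideanLin_apply, Matrix.fromBlocks_mulVec]
    congr 1
    simp [Matrix.zero_mulVec]
    rfl
  have key : ‖Matrix.toEuclideanLin (𝕜 := ℝ) (Matrix.fromBlocks (0 : Matrix a a ℝ) 0 0 B) x‖
      = ‖Matrix.toEuclideanLin (𝕜 := ℝ) B x₂‖ := by
    rw [happ, Matrix.toEuclideanLin_apply]
    rw [EuclideanSpace.norm_eq, EuclideanSpace.norm_eq]
    congr 1
    rw [Fintype.sum_sum_type]
    simp [hx2]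
  rw [key]
  have h1 : ‖x₂‖ ≤ ‖x‖ := by
    rw [EuclideanSpace.norm_eq, EuclideanSpace.norm_eq]
    apply Real.sqrt_le_sqrt
    rw [Fintype.sum_sum_type]
    have h2 : (0:ℝ) ≤ ∑ j : a, ‖x (Sum.inl j)‖^2 := by positivity
    have h3 : ∑ i : b, ‖x₂ i‖^2 = ∑ i : b, ‖x (Sum.inr i)‖^2 := by
      simp [hx2]
    rw [h3]
    linarith
  calc ‖Matrix.toEuclideanLin (𝕜 := ℝ) B x₂‖ ≤ ‖B‖ * ‖x₂‖ := euclid_apply_norm B x₂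
    _ ≤ ‖B‖ * ‖x‖ := mul_le_mul_of_nonneg_left h1 (norm_nonneg B)

lemma l2_norm_one_le (c : Type*) [Fintype c] [DecidableEq c] :
    ‖(1 : Matrix c c ℝ)‖ ≤ 1 := by
  rw [Matrix.l2_opNorm_def]
  refine ContinuousLinearMap.opNorm_le_bound _ zero_le_one fun x => ?_
  show ‖Matrix.toEuclideanLin (𝕜 := ℝ) (1 : Matrix c c ℝ) x‖ ≤ 1 * ‖x‖
  have : Matrix.toEuclideanLin (𝕜 := ℝ) (1 : Matrix c c ℝ) x = x := by
    rw [Matrix.toEuclideanLin_apply, Matrix.one_mulVec, WithLp.toLp_ofLp]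
  rw [this, one_mul]

lemma pow_identity {n N : ℕ} (G : Matrix (Fin N) (Fin n) ℝ) (Y : Matrix (Fin N) (Fin N) ℝ)
    (k : ℕ) :
    (1 - Matrix.fromBlocks (1 : Matrix (Fin n) (Fin n) ℝ) 0 G Y) * (Matrix.fromBlocks (1 : Matrix (Fin n) (Fin n) ℝ) 0 G Y) ^ k =
      Matrix.fromBlocks 0 0 (-(Y ^ k * G)) ((1 - Y) * Y ^ k) := by
  induction k with
  | zero =>
      rw [pow_zero, mul_one, ← Matrix.fromBlocks_one, sub_eq_add_neg, Matrix.fromBlocks_neg,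
        Matrix.fromBlocks_add]
      rw [Matrix.fromBlocks_inj]
      refine ⟨by simp, by simp, by simp, by simp [sub_eq_add_neg]⟩
  | succ k ih =>
      rw [pow_succ, ← mul_assoc, ih, Matrix.fromBlocks_multiply, Matrix.fromBlocks_inj]
      refine ⟨by simp, by simp, ?_, by simp [pow_succ, Matrix.mul_assoc]⟩
      have h : (1 - Y) * Y ^ k * G = Y ^ k * G - Y * (Y ^ k * G) := by
        rw [Matrix.sub_mul, Matrix.one_mul, Matrix.sub_mul, Matrix.mul_assoc]
      rw [Matrix.mul_one, h, pow_succ', Matrix.mul_assoc]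
      abel

lemma key_identity {n N : ℕ} (G : Matrix (Fin N) (Fin n) ℝ) (Y : Matrix (Fin N) (Fin N) ℝ)
    (q : Polynomial ℝ) :
    (1 - Matrix.fromBlocks (1 : Matrix (Fin n) (Fin n) ℝ) 0 G Y) * (Polynomial.aeval (Matrix.fromBlocks (1 : Matrix (Fin n) (Fin n) ℝ) 0 G Y)) q =
      Matrix.fromBlocks 0 0 (-(Polynomial.aeval Y q * G)) ((1 - Y) * Polynomial.aeval Y q) := by
  induction q using Polynomial.induction_on' with
  | add p q hp hq =>
      rw [map_add, mul_add, hp, hq, map_add, Matrix.fromBlocks_add, Matrix.fromBlocks_inj]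
      refine ⟨by simp, by simp, by rw [Matrix.add_mul]; abel, by rw [Matrix.mul_add]⟩
  | monomial k c =>
      rw [Polynomial.aeval_monomial, Polynomial.aeval_monomial, ← Algebra.smul_def,
        ← Algebra.smul_def, mul_smul_comm, pow_identity, Matrix.fromBlocks_smul,
        Matrix.fromBlocks_inj]
      refine ⟨by simp, by simp, by simp [smul_mul_assoc], by simp [mul_smul_comm]⟩

/-- For the block lower triangular matrix `T = [[Iₙ, 0],[G, Y]]`, a real
polynomial `q`, and `p(z) = (1 − z)·q(z)`, one has `p(0) = q(0)`, `deg p ≤ deg q + 1`, and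
`‖p(T)‖ ≤ (1 + ‖G‖ + ‖Y‖)·‖q(Y)‖` in the spectral norm. -/
theorem block_lower_triangular_polynomial_bound {n N : ℕ}
    (G : Matrix (Fin N) (Fin n) ℝ) (Y : Matrix (Fin N) (Fin N) ℝ)
    (T : Matrix (Fin n ⊕ Fin N) (Fin n ⊕ Fin N) ℝ)
    (hT : T = Matrix.fromBlocks 1 0 G Y)
    (q p : Polynomial ℝ) (hp : p = (1 - Polynomial.X) * q) :
    p.eval 0 = q.eval 0 ∧ p.natDegree ≤ q.natDegree + 1 ∧
      spectralNorm' ((Polynomial.aeval T) p) ≤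
        (1 + spectralNorm' G + spectralNorm' Y) * spectralNorm' ((Polynomial.aeval Y) q) := by
  subst hT hp
  refine ⟨by simp, ?_, ?_⟩
  · calc ((1 - Polynomial.X) * q).natDegree
        ≤ (1 - Polynomial.X : Polynomial ℝ).natDegree + q.natDegree :=
          Polynomial.natDegree_mul_le
      _ ≤ 1 + q.natDegree := by
          have := Polynomial.natDegree_sub_le (1 : Polynomial ℝ) Polynomial.X
          simp at this
          omega
      _ = q.natDegree + 1 := by omega
  · have heval : (Polynomial.aeval (Matrix.fromBlocks (1 : Matrix (Fin n) (Fin n) ℝ) 0 G Y)) ((1 - Polynomial.X) * q)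
        = Matrix.fromBlocks 0 0 (-(Polynomial.aeval Y q * G))
            ((1 - Y) * Polynomial.aeval Y q) := by
      rw [_root_.map_mul, map_sub, Polynomial.aeval_one, Polynomial.aeval_X, key_identity]
    rw [heval]
    simp only [spectralNorm'_eq_norm]
    set Q := Polynomial.aeval Y q with hQ
    have split : Matrix.fromBlocks (0 : Matrix (Fin n) (Fin n) ℝ) 0 (-(Q * G)) ((1 - Y) * Q)
        = Matrix.fromBlocks (0 : Matrix (Fin n) (Fin n) ℝ) (0 : Matrix (Fin n) (Fin N) ℝ)
            (-(Q * G)) (0 : Matrix (Fin N) (Fin N) ℝ)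
          + Matrix.fromBlocks (0 : Matrix (Fin n) (Fin n) ℝ) (0 : Matrix (Fin n) (Fin N) ℝ)
            (0 : Matrix (Fin N) (Fin n) ℝ) ((1 - Y) * Q) := by
      rw [Matrix.fromBlocks_add]
      congr 1 <;> simp
    have h1 : ‖Matrix.fromBlocks (0 : Matrix (Fin n) (Fin n) ℝ) 0 (-(Q * G)) ((1 - Y) * Q)‖
        ≤ ‖Matrix.fromBlocks (0 : Matrix (Fin n) (Fin n) ℝ) (0 : Matrix (Fin n) (Fin N) ℝ)
            (-(Q * G)) (0 : Matrix (Fin N) (Fin N) ℝ)‖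
          + ‖Matrix.fromBlocks (0 : Matrix (Fin n) (Fin n) ℝ) (0 : Matrix (Fin n) (Fin N) ℝ)
            (0 : Matrix (Fin N) (Fin n) ℝ) ((1 - Y) * Q)‖ := by
      rw [split]; exact norm_add_le _ _
    have h2 := norm_fromBlocks_lowerLeft (a := Fin n) (b := Fin N) (-(Q * G))
    have h3 := norm_fromBlocks_lowerRight (a := Fin n) (b := Fin N) ((1 - Y) * Q)
    have h4 : ‖-(Q * G)‖ = ‖Q * G‖ := norm_neg _
    have h5 : ‖Q * G‖ ≤ ‖Q‖ * ‖G‖ := Matrix.l2_opNorm_mul Q G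
    have h6 : ‖(1 - Y) * Q‖ ≤ ‖(1 - Y : Matrix (Fin N) (Fin N) ℝ)‖ * ‖Q‖ :=
      Matrix.l2_opNorm_mul _ Q
    have h7 : ‖(1 - Y : Matrix (Fin N) (Fin N) ℝ)‖ ≤ 1 + ‖Y‖ := by
      calc ‖(1 - Y : Matrix (Fin N) (Fin N) ℝ)‖ ≤ ‖(1 : Matrix (Fin N) (Fin N) ℝ)‖ + ‖Y‖ :=
            norm_sub_le _ _
        _ ≤ 1 + ‖Y‖ := by linarith [l2_norm_one_le (Fin N)]
    have hQ0 : (0:ℝ) ≤ ‖Q‖ := norm_nonneg _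
    have hG0 : (0:ℝ) ≤ ‖G‖ := norm_nonneg _
    have hY0 : (0:ℝ) ≤ ‖Y‖ := norm_nonneg _
    nlinarith [norm_nonneg ((1 - Y : Matrix (Fin N) (Fin N) ℝ))]
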